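/- Let α ∈ (0,1), let ρ_α(u) = α·max(u, 0) + (1 − α)·max(−u, 0) be the pinball loss, let N ∈ ℕ, let s₁,…,s_N ∈ ℝ, let z₁,…,z_N be points of a set 𝒵, and let 𝒢 be a set of functions g: 𝒵 → ℝ that is closed under adding constants (g ∈ 𝒢 and c ∈ ℝ imply g + c ∈ 𝒢). Suppose ĝ ∈ 𝒢 minimizes the empirical pinball objective g ↦ Σ_{i=1}^N ρ_α(s_i − g(z_i)) over 𝒢. Let n₀ = #{i : s_i = ĝ(z_i)}. Then αN ≤ #{i : s_i ≤ ĝ(z_i)} ≤ αN + n₀; equivalently, |(1/N)·#{i : s_i ≤ ĝ(z_i)} − α| ≤ n₀/N. -/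
import Mathlib


open Finset

lemma pinball_shift_up (α ε u : ℝ) (hε : 0 < ε) (h : u = 0 ∨ ε ≤ |u|) :
    α * max (u - ε) 0 + (1 - α) * max (-(u - ε)) 0 =
      α * max u 0 + (1 - α) * max (-u) 0 + (if u ≤ 0 then (1 - α) * ε else -(α * ε)) := by
  rcases le_or_gt u 0 with hu | hu
  · rw [if_pos hu, max_eq_right (by linarith : u - ε ≤ 0), max_eq_right hu,
      max_eq_left (by linarith : (0:ℝ) ≤ -(u - ε)), max_eq_left (by linarith : (0:ℝ) ≤ -u)]
    ring
  · have hεu : ε ≤ u := by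
      rcases h with h | h
      · linarith
      · rwa [abs_of_pos hu] at h
    rw [if_neg (not_le.mpr hu), max_eq_left (by linarith : (0:ℝ) ≤ u - ε),
      max_eq_left hu.le, max_eq_right (by linarith : -(u - ε) ≤ 0),
      max_eq_right (by linarith : -u ≤ 0)]
    ring

lemma pinball_shift_down (α ε u : ℝ) (hε : 0 < ε) (h : u = 0 ∨ ε ≤ |u|) :
    α * max (u + ε) 0 + (1 - α) * max (-(u + ε)) 0 =
      α * max u 0 + (1 - α) * max (-u) 0 + (if 0 ≤ u then α * ε else -((1 - α) * ε)) := by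
  rcases le_or_gt 0 u with hu | hu
  · rw [if_pos hu, max_eq_left (by linarith : (0:ℝ) ≤ u + ε), max_eq_left hu,
      max_eq_right (by linarith : -(u + ε) ≤ 0), max_eq_right (by linarith : -u ≤ 0)]
    ring
  · have hεu : ε ≤ -u := by
      rcases h with h | h
      · linarith
      · rwa [abs_of_neg hu] at h
    rw [if_neg (not_le.mpr hu), max_eq_right (by linarith : u + ε ≤ 0),
      max_eq_right hu.le, max_eq_left (by linarith : (0:ℝ) ≤ -(u + ε)),
      max_eq_left (by linarith : (0:ℝ) ≤ -u)]
    ring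

/-- **Empirical quantile balance at a pinball optimum.** If `ĝ` minimizes the
empirical pinball objective `g ↦ Σ_i ρ_α(s_i − g(z_i))` over a class `𝒢` closed
under adding constants, and `n₀ = #{i : s_i = ĝ(z_i)}`, then
`αN ≤ #{i : s_i ≤ ĝ(z_i)} ≤ αN + n₀`. -/
theorem pinball_optimum_quantile_balance
    {𝒵 : Type*} (α : ℝ) (hα : α ∈ Set.Ioo (0 : ℝ) 1)
    (N : ℕ) (s : Fin N → ℝ) (z : Fin N → 𝒵)
    (G : Set (𝒵 → ℝ))
    (hG : ∀ g ∈ G, ∀ c : ℝ, (fun x => g x + c) ∈ G)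
    (ghat : 𝒵 → ℝ) (hmem : ghat ∈ G)
    (hopt : ∀ g ∈ G,
      ∑ i, (α * max (s i - ghat (z i)) 0 + (1 - α) * max (-(s i - ghat (z i))) 0) ≤
        ∑ i, (α * max (s i - g (z i)) 0 + (1 - α) * max (-(s i - g (z i))) 0)) :
    α * N ≤ ((univ.filter fun i => s i ≤ ghat (z i)).card : ℝ) ∧
    ((univ.filter fun i => s i ≤ ghat (z i)).card : ℝ) ≤
      α * N + ((univ.filter fun i => s i = ghat (z i)).card : ℝ) := by
  obtain ⟨hα0, hα1⟩ := hα
  set r : Fin N → ℝ := fun i => s i - ghat (z i) with hr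
  -- choose a small ε
  obtain ⟨ε, hε, hεle⟩ : ∃ ε : ℝ, 0 < ε ∧ ∀ i, r i = 0 ∨ ε ≤ |r i| := by
    by_cases h : (univ.filter fun i => r i ≠ 0).Nonempty
    · refine ⟨(univ.filter fun i => r i ≠ 0).inf' h (fun i => |r i|), ?_, ?_⟩
      · rw [Finset.lt_inf'_iff]
        intro i hi
        exact abs_pos.mpr (mem_filter.mp hi).2
      · intro i
        by_cases hi : r i = 0
        · exact Or.inl hi
        · exact Or.inr (Finset.inf'_le _ (mem_filter.mpr ⟨mem_univ i, hi⟩))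
    · refine ⟨1, one_pos, fun i => ?_⟩
      by_contra hc
      push_neg at hc
      exact h ⟨i, mem_filter.mpr ⟨mem_univ i, hc.1⟩⟩
  -- set cardinalities
  set m : ℕ := (univ.filter fun i => s i ≤ ghat (z i)).card with hm
  set n0 : ℕ := (univ.filter fun i => s i = ghat (z i)).card with hn0
  set k : ℕ := (univ.filter fun i => s i < ghat (z i)).card with hk
  have hmk : m = k + n0 := by
    rw [hm, hk, hn0, ← Finset.card_union_of_disjoint]
    · congr 1
      rw [← Finset.filter_or]
      apply Finset.filter_congr
      intro i _
      simp [le_iff_lt_or_eq]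
    · rw [Finset.disjoint_filter]
      intro i _ hlt heq
      exact absurd heq (ne_of_lt hlt)
  -- first inequality: perturb by +ε
  have h1 : α * N ≤ (m : ℝ) := by
    have key := hopt (fun x => ghat x + ε) (hG ghat hmem ε)
    have hrw : ∀ i : Fin N,
        α * max (s i - (ghat (z i) + ε)) 0 + (1 - α) * max (-(s i - (ghat (z i) + ε))) 0 =
          α * max (s i - ghat (z i)) 0 + (1 - α) * max (-(s i - ghat (z i))) 0 +
            (if r i ≤ 0 then (1 - α) * ε else -(α * ε)) := by
      intro i
      have := pinball_shift_up α ε (r i) hε (hεle i)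
      simp only [hr] at this ⊢
      rw [show s i - (ghat (z i) + ε) = (s i - ghat (z i)) - ε by ring]
      exact this
    rw [Finset.sum_congr rfl (fun i _ => hrw i), Finset.sum_add_distrib,
      Finset.sum_add_distrib, Finset.sum_add_distrib] at key
    have hsum : (0 : ℝ) ≤ ∑ i, (if r i ≤ 0 then (1 - α) * ε else -(α * ε)) := by linarith
    rw [Finset.sum_ite, Finset.sum_const, Finset.sum_const, nsmul_eq_mul, nsmul_eq_mul] at hsum
    have hcard1 : (univ.filter fun i => r i ≤ 0) = (univ.filter fun i => s i ≤ ghat (z i)) := by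
      apply Finset.filter_congr; intro i _; simp [hr, sub_nonpos]
    have hcard2 : (univ.filter fun i => ¬ r i ≤ 0).card = N - m := by
      have := Finset.card_filter_add_card_filter_not (s := univ)
        (p := fun i => r i ≤ 0)
      rw [hcard1] at this
      simp only [Finset.card_univ, Fintype.card_fin] at this
      omega
    rw [hcard1, hcard2] at hsum
    have hmN : m ≤ N := by
      rw [hm]
      simpa using Finset.card_filter_le univ (fun i => s i ≤ ghat (z i))
    have : ((N - m : ℕ) : ℝ) = (N : ℝ) - m := by
      rw [Nat.cast_sub hmN]
    rw [this] at hsum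
    nlinarith
  refine ⟨h1, ?_⟩
  -- second inequality: perturb by -ε
  have key := hopt (fun x => ghat x + (-ε)) (hG ghat hmem (-ε))
  have hrw : ∀ i : Fin N,
      α * max (s i - (ghat (z i) + (-ε))) 0 + (1 - α) * max (-(s i - (ghat (z i) + (-ε)))) 0 =
        α * max (s i - ghat (z i)) 0 + (1 - α) * max (-(s i - ghat (z i))) 0 +
          (if 0 ≤ r i then α * ε else -((1 - α) * ε)) := by
    intro i
    have := pinball_shift_down α ε (r i) hε (hεle i)
    simp only [hr] at this ⊢
    rw [show s i - (ghat (z i) + (-ε)) = (s i - ghat (z i)) + ε by ring]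
    exact this
  rw [Finset.sum_congr rfl (fun i _ => hrw i), Finset.sum_add_distrib,
    Finset.sum_add_distrib, Finset.sum_add_distrib] at key
  have hsum : (0 : ℝ) ≤ ∑ i, (if 0 ≤ r i then α * ε else -((1 - α) * ε)) := by linarith
  rw [Finset.sum_ite, Finset.sum_const, Finset.sum_const, nsmul_eq_mul, nsmul_eq_mul] at hsum
  have hcard3 : (univ.filter fun i => ¬ 0 ≤ r i) = (univ.filter fun i => s i < ghat (z i)) := by
    apply Finset.filter_congr; intro i _; simp [hr, sub_nonneg, not_le]
  have hcard4 : (univ.filter fun i => 0 ≤ r i).card = N - k := by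
    have := Finset.card_filter_add_card_filter_not (s := univ)
      (p := fun i => 0 ≤ r i)
    rw [hcard3] at this
    simp only [Finset.card_univ, Fintype.card_fin] at this
    omega
  rw [hcard3, hcard4] at hsum
  have hkN : k ≤ N := by
    rw [hk]
    simpa using Finset.card_filter_le univ (fun i => s i < ghat (z i))
  have hc : ((N - k : ℕ) : ℝ) = (N : ℝ) - k := by rw [Nat.cast_sub hkN]
  rw [hc] at hsum
  have hkα : (k : ℝ) ≤ α * N := by nlinarith
  have : (m : ℝ) = (k : ℝ) + (n0 : ℝ) := by
    rw [hmk]; push_cast; ring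
  linarith
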